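/- Let A be a separable unital C*-algebra with nontrivial weak extension semigroup Ext_w(A). Then ℂ ⊕ A is not W*-C*-projective: there exist a von Neumann algebra B (namely B(ℓ²)), the quotient map π onto the Calkin algebra, and a unital *-homomorphism from ℂ ⊕ A to the Calkin algebra that admits no lift. More concretely: if ρ : A → B(ℓ²)/K(ℓ²) is an injective unital *-homomorphism that is not weakly equivalent to a trivial extension, then there is no (non-unital) *-homomorphism γ : A → B(ℓ²) with π ∘ γ = ρ. -/

import Mathlib

/-!
A lift `γ` of `ρ` need not be unital, but `P = γ 1` is a projection with `π P = 1`, so `1 - P`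
is compact. Hence `ker P` is finite-dimensional and the range of `P` is again an
infinite-dimensional separable Hilbert space, so there is an isometry `V` of `H` onto it, i.e.
`V⋆V = 1` and `VV⋆ = P`. Compressing by `V` makes `γ` unital: `V⋆ γ(·) V` is a unital
*-homomorphism lifting `π(V)⋆ ρ(·) π(V)`, so `ρ` would be weakly trivial.
-/

open Metric TopologicalSpace

section Compress

variable {R A B : Type*} [CommSemiring R] [Semiring A] [Algebra R A] [Star A]
  [Semiring B] [Algebra R B] [StarRing B]

def NonUnitalStarAlgHom.compress (γ : A →⋆ₙₐ[R] B) (v : B) (hv : star v * v = 1)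
    (hvγ : v * star v = γ 1) : A →⋆ₐ[R] B where
  toFun a := star v * γ a * v
  map_one' := by rw [← hvγ, mul_assoc, mul_assoc, hv, mul_one, hv]
  map_mul' a b := by
    calc star v * γ (a * b) * v = star v * (γ a * γ 1 * γ b) * v := by
          rw [← map_mul, ← map_mul, mul_one]
      _ = star v * γ a * v * (star v * γ b * v) := by rw [← hvγ]; noncomm_ring
  map_zero' := by simp
  map_add' a b := by simp [mul_add, add_mul]
  commutes' c := by
    simp only [Algebra.algebraMap_eq_smul_one, map_smul, mul_smul_comm, smul_mul_assoc, ← hvγ]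
    rw [mul_assoc, mul_assoc, hv, mul_one, hv]
  map_star' a := by simp [map_star, mul_assoc]

@[simp]
theorem NonUnitalStarAlgHom.compress_apply (γ : A →⋆ₙₐ[R] B) (v : B) (hv : star v * v = 1)
    (hvγ : v * star v = γ 1) (a : A) : γ.compress v hv hvγ a = star v * γ a * v :=
  rfl

end Compress

section Compact

variable {𝕜 E : Type*} [NontriviallyNormedField 𝕜] [CompleteSpace 𝕜]
  [AddCommGroup E] [Module 𝕜 E] [TopologicalSpace E] [T2Space E] [IsTopologicalAddGroup E]
  [ContinuousSMul 𝕜 E]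

theorem IsCompactOperator.finiteDimensional_of_eqOn_id {f : E →ₗ[𝕜] E}
    (hf : IsCompactOperator f) {V : Submodule 𝕜 E} (hV : IsClosed (V : Set E))
    (hfV : Set.EqOn f id V) : FiniteDimensional 𝕜 V := by
  have hmaps : ∀ v ∈ V, f v ∈ V := fun v hv ↦ by rwa [hfV hv]
  have hrestrict : f.restrict hmaps = LinearMap.id := LinearMap.ext fun v ↦ Subtype.ext (hfV v.2)
  apply FiniteDimensional.of_isCompactOperator_id
  simpa [hrestrict] using hf.restrict hmaps hV

theorem ContinuousLinearMap.IsIdempotentElem.not_finiteDimensional_range {P : E →L[𝕜] E}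
    (hP : IsIdempotentElem P) (hcompact : IsCompactOperator ⇑(1 - P))
    (hE : ¬FiniteDimensional 𝕜 E) : ¬FiniteDimensional 𝕜 P.range := by
  intro hrange
  have hker : FiniteDimensional 𝕜 P.ker :=
    hcompact.finiteDimensional_of_eqOn_id (f := ((1 - P : E →L[𝕜] E) : E →ₗ[𝕜] E))
      P.isClosed_ker fun x hx ↦ by simp [LinearMap.mem_ker.1 hx]
  have hsup : P.range ⊔ P.ker = ⊤ :=
    (LinearMap.IsIdempotentElem.isCompl (IsIdempotentElem.toLinearMap hP)).sup_eq_top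
  have : FiniteDimensional 𝕜 (⊤ : Submodule 𝕜 E) := hsup ▸ inferInstance
  exact hE Submodule.topEquiv.finiteDimensional

end Compact

section Hilbert

variable {𝕜 E F : Type*} [RCLike 𝕜] [NormedAddCommGroup E] [InnerProductSpace 𝕜 E]
  [NormedAddCommGroup F] [InnerProductSpace 𝕜 F]

theorem Orthonormal.one_le_dist {ι : Type*} {v : ι → E} (hv : Orthonormal 𝕜 v) {i j : ι}
    (hij : i ≠ j) : 1 ≤ dist (v i) (v j) := by
  have hsq : ‖v i - v j‖ ^ 2 = 2 := by
    rw [@norm_sub_sq 𝕜, hv.1 i, hv.1 j, hv.2 hij]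
    norm_num
  rw [dist_eq_norm]
  nlinarith [norm_nonneg (v i - v j)]

theorem Orthonormal.countable [SeparableSpace E] {ι : Type*} {v : ι → E}
    (hv : Orthonormal 𝕜 v) : Countable ι :=
  Pairwise.countable_of_isOpen_disjoint (s := fun i ↦ ball (v i) (1 / 2))
    (fun _ _ hij ↦ ball_disjoint_ball (by linarith [hv.one_le_dist hij]))
    (fun _ ↦ isOpen_ball) (fun _ ↦ nonempty_ball.2 one_half_pos)

theorem HilbertBasis.finiteDimensional {ι : Type*} [Finite ι] (b : HilbertBasis ι 𝕜 E) :
    FiniteDimensional 𝕜 E :=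
  have := Fintype.ofFinite ι
  .of_basis b.toOrthonormalBasis.toBasis

variable [CompleteSpace E]

noncomputable def HilbertBasis.reindex {ι ι' : Type*} (b : HilbertBasis ι 𝕜 E) (e : ι ≃ ι') :
    HilbertBasis ι' 𝕜 E :=
  .mk (b.orthonormal.comp e.symm e.symm.injective) <| by
    rw [Set.range_comp, e.symm.surjective.range_eq, Set.image_univ, b.dense_span]

variable [SeparableSpace E] [CompleteSpace F] [SeparableSpace F]

theorem nonempty_linearIsometryEquiv_of_not_finiteDimensional (hE : ¬FiniteDimensional 𝕜 E)
    (hF : ¬FiniteDimensional 𝕜 F) : Nonempty (E ≃ₗᵢ[𝕜] F) := by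
  obtain ⟨ι, b, -⟩ := exists_hilbertBasis 𝕜 E
  obtain ⟨κ, c, -⟩ := exists_hilbertBasis 𝕜 F
  have := b.orthonormal.countable
  have := c.orthonormal.countable
  have : Infinite ι := not_finite_iff_infinite.1 fun _ ↦ hE b.finiteDimensional
  have : Infinite κ := not_finite_iff_infinite.1 fun _ ↦ hF c.finiteDimensional
  obtain ⟨e⟩ := nonempty_equiv_of_countable (α := ι) (β := κ)
  exact ⟨b.repr.trans (c.reindex e.symm).repr.symm⟩

open ContinuousLinearMap in
theorem IsStarProjection.exists_isometry_mul_star_eq {P : E →L[𝕜] E} (hP : IsStarProjection P)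
    (hE : ¬FiniteDimensional 𝕜 E) (hPE : ¬FiniteDimensional 𝕜 P.range) :
    ∃ V : E →L[𝕜] E, star V * V = 1 ∧ V * star V = P := by
  have : CompleteSpace P.range := hP.isIdempotentElem.isClosed_range.completeSpace_coe
  obtain ⟨e⟩ := nonempty_linearIsometryEquiv_of_not_finiteDimensional (𝕜 := 𝕜) hE hPE
  refine ⟨P.range.subtypeL ∘L e.toContinuousLinearEquiv.toContinuousLinearMap, ?_, ?_⟩
  · rw [star_eq_adjoint, mul_def, ← isometry_iff_adjoint_comp_self]
    exact P.range.subtypeₗᵢ.isometry.comp e.isometry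
  · obtain ⟨_, hPeq⟩ := isStarProjection_iff_eq_starProjection_range.1 hP
    conv_rhs => rw [hPeq]
    rw [star_eq_adjoint, mul_def, adjoint_comp, Submodule.adjoint_subtypeL,
      LinearIsometryEquiv.adjoint_eq_symm]
    ext x
    simp only [comp_apply, ContinuousLinearEquiv.coe_coe,
      LinearIsometryEquiv.coe_toContinuousLinearEquiv, LinearIsometryEquiv.apply_symm_apply]
    rfl

end Hilbert

theorem no_lift_of_nontrivial_extension_general
    {H : Type*} [NormedAddCommGroup H] [InnerProductSpace ℂ H] [CompleteSpace H]
    [TopologicalSpace.SeparableSpace H] (hinf : ¬ FiniteDimensional ℂ H)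
    {M : Type*} [NormedRing M] [StarRing M] [NormedAlgebra ℂ M]
    (π : (H →L[ℂ] H) →⋆ₐ[ℂ] M)
    (hker : ∀ T : H →L[ℂ] H, π T = 0 ↔ IsCompactOperator ⇑T)
    {A : Type*} [NormedRing A] [StarRing A] [NormedAlgebra ℂ A] (ρ : A →⋆ₐ[ℂ] M)
    (hnontrivial : ∀ V : H →L[ℂ] H, star V * V = 1 →
      ¬ ∃ γ₀ : A →⋆ₐ[ℂ] (H →L[ℂ] H), ∀ a, π (γ₀ a) = π (star V) * ρ a * π V) :
    ¬ ∃ γ : A →⋆ₙₐ[ℂ] (H →L[ℂ] H), ∀ a, π (γ a) = ρ a := by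
  rintro ⟨γ, hγ⟩
  have hP : IsStarProjection (γ 1) := (IsStarProjection.one (R := A)).map γ
  have hcompact : IsCompactOperator ⇑(1 - γ 1) := (hker _).1 (by simp [hγ])
  have hrange : ¬FiniteDimensional ℂ (γ 1).range :=
    ContinuousLinearMap.IsIdempotentElem.not_finiteDimensional_range hP.isIdempotentElem
      hcompact hinf
  obtain ⟨V, hV, hVV⟩ := hP.exists_isometry_mul_star_eq hinf hrange
  exact hnontrivial V hV ⟨γ.compress V hV hVV, fun a ↦ by simp [hγ]⟩

/-- Proposition 4.17(2), concretely: let `H` be an infinite-dimensional separable Hilbert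
space, `π : B(H) → M` a surjective unital *-homomorphism whose kernel consists exactly of
the compact operators (so `M` is the Calkin algebra), `A` a separable unital C*-algebra and
`ρ : A → M` an injective unital *-homomorphism that is not weakly equivalent to a trivial
extension (i.e. for no isometry `V ∈ B(H)` does `π(V)* ρ(·) π(V)` lift to `B(H)`).
Then `ρ` admits no (possibly non-unital) *-homomorphism lift `γ : A → B(H)`; in particular
`ℂ ⊕ A` is not W*-C*-projective. -/
theorem no_lift_of_nontrivial_extension
    {H : Type*} [NormedAddCommGroup H] [InnerProductSpace ℂ H] [CompleteSpace H]
    [TopologicalSpace.SeparableSpace H] (hinf : ¬ FiniteDimensional ℂ H)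
    {M : Type*} [NormedRing M] [StarRing M] [CStarRing M] [CompleteSpace M]
    [NormedAlgebra ℂ M] [StarModule ℂ M]
    (π : (H →L[ℂ] H) →⋆ₐ[ℂ] M) (hπ : Function.Surjective π)
    (hker : ∀ T : H →L[ℂ] H, π T = 0 ↔ IsCompactOperator ⇑T)
    {A : Type*} [NormedRing A] [StarRing A] [CStarRing A] [CompleteSpace A]
    [NormedAlgebra ℂ A] [StarModule ℂ A] [TopologicalSpace.SeparableSpace A]
    (ρ : A →⋆ₐ[ℂ] M) (hρ : Function.Injective ρ)
    (hnontrivial : ∀ V : H →L[ℂ] H, star V * V = 1 →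
      ¬ ∃ γ₀ : A →⋆ₐ[ℂ] (H →L[ℂ] H), ∀ a, π (γ₀ a) = π (star V) * ρ a * π V) :
    ¬ ∃ γ : A →⋆ₙₐ[ℂ] (H →L[ℂ] H), ∀ a, π (γ a) = ρ a :=
  no_lift_of_nontrivial_extension_general hinf π hker ρ hnontrivial
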